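/- With the notation of the recursive choice above, for each 2 ≤ i ≤ m, the (m+1)-tuple (2, k_1, k_{i+1}, ..., k_m, k'_2, ..., k'_i) — where k'_i > 2C + k_{i+1} + ... + k_m + k'_2 + ... + k'_{i-1} and (k_1, ..., k_m) is C-very spread — is spread when its entries are listed in increasing order. -/

import Mathlib

/-!
Each entry exceeding the sum of its predecessors already forces the list to increase, so only
that has to be checked, block by block, with the running sum carried along. After `2, k₁` it is
`2 + k₁ ≤ 2C`. An entry `k_j` of the `k`-block is then preceded by `k_{i+1}, …, k_{j-1}`, part
of `k₂, …, k_{j-1}`, so very-spreadness bounds it; an entry `k'_j` is preceded by the whole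
`k`-block `k_{i+1}, …, k_m`, part of `k_{j+1}, …, k_m`, and by `k'₂, …, k'_{j-1}`, which is what
the recursive choice of `k'_j` dominates.
-/

/-- A list of naturals is spread: strictly increasing, and each entry after
the first exceeds the sum of all earlier entries. -/
def SpreadList (l : List ℕ) : Prop :=
  List.Pairwise (· < ·) l ∧
    ∀ (n : ℕ) (h : n < l.length), 0 < n → (l.take n).sum < l.get ⟨n, h⟩

def SpreadFrom (s : ℕ) : List ℕ → Prop
  | [] => True
  | x :: l => s < x ∧ SpreadFrom (s + x) l

namespace SpreadFrom

theorem append : ∀ {s : ℕ} {A B : List ℕ},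
    SpreadFrom s A → SpreadFrom (s + A.sum) B → SpreadFrom s (A ++ B)
  | _, [], _, _, hB => by simpa using hB
  | _, _ :: _, _, ⟨hx, hA⟩, hB => ⟨hx, append hA (by simpa [add_assoc] using hB)⟩

theorem lt_of_mem : ∀ {s : ℕ} {l : List ℕ}, SpreadFrom s l → ∀ y ∈ l, s < y
  | _, [], _, _, hy => absurd hy List.not_mem_nil
  | s, x :: _, ⟨hx, hl⟩, y, hy => by
    rcases List.mem_cons.1 hy with rfl | hy
    · exact hx
    · exact (Nat.le_add_right s x).trans_lt (hl.lt_of_mem y hy)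

theorem pairwise_lt : ∀ {s : ℕ} {l : List ℕ}, SpreadFrom s l → l.Pairwise (· < ·)
  | _, [], _ => List.Pairwise.nil
  | s, x :: _, ⟨_, hl⟩ => List.pairwise_cons.2
      ⟨fun y hy => (Nat.le_add_left x s).trans_lt (hl.lt_of_mem y hy), hl.pairwise_lt⟩

theorem sum_take_add_lt_get : ∀ {s : ℕ} {l : List ℕ} {n : ℕ} (h : n < l.length),
    SpreadFrom s l → (l.take n).sum + s < l.get ⟨n, h⟩
  | _, _ :: _, 0, _, ⟨hx, _⟩ => by simpa using hx
  | _, x :: l, n + 1, h, ⟨_, hl⟩ => by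
    have := hl.sum_take_add_lt_get (Nat.lt_of_succ_lt_succ h)
    simpa [add_comm, add_left_comm, add_assoc] using this

theorem spreadList {l : List ℕ} (h : SpreadFrom 0 l) : SpreadList l :=
  ⟨h.pairwise_lt, fun n hn _ => by simpa using h.sum_take_add_lt_get hn⟩

end SpreadFrom

theorem List.sum_map_range'_eq_sum_Ico {M : Type*} [AddCommMonoid M] (f : ℕ → M) (a n : ℕ) :
    ((List.range' a n).map f).sum = ∑ l ∈ Finset.Ico a (a + n), f l := by
  rw [Nat.Ico_eq_range', Nat.add_sub_cancel_left]
  rfl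

theorem spreadFrom_map_range' {f : ℕ → ℕ} : ∀ {s a n : ℕ},
    (∀ j, a ≤ j → j < a + n → s + ∑ l ∈ Finset.Ico a j, f l < f j) →
    SpreadFrom s ((List.range' a n).map f)
  | _, _, 0, _ => trivial
  | s, a, n + 1, h => by
    refine ⟨by simpa using h a le_rfl (by omega), spreadFrom_map_range' fun j hj1 hj2 => ?_⟩
    rw [add_assoc, ← Finset.sum_eq_sum_Ico_succ_bot (by omega) f]
    exact h j (by omega) (by omega)

theorem extraRegularity_tuple_spread_general (m C i : ℕ) (k k' : ℕ → ℕ)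
    (hk1 : 2 < k 1) (hk1C : k 1 ≤ C)
    (hvs : ∀ j, 2 ≤ j → j ≤ m → 2 * C + ∑ l ∈ Finset.Ico 2 j, k l < k j)
    (hi : 2 ≤ i)
    (hrec : ∀ j, 2 ≤ j → j ≤ i →
      2 * C + (∑ l ∈ Finset.Icc (j + 1) m, k l) + ∑ l ∈ Finset.Ico 2 j, k' l < k' j) :
    SpreadList (2 :: k 1 ::
      ((List.range' (i + 1) (m - i)).map k ++ (List.range' 2 (i - 1)).map k')) := by
  have h_offset : 0 + 2 + k 1 ≤ 2 * C := by omega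
  refine SpreadFrom.spreadList ⟨two_pos, hk1, SpreadFrom.append
    (spreadFrom_map_range' fun j hj1 hj2 => ?_) (spreadFrom_map_range' fun j hj1 hj2 => ?_)⟩
  · calc 0 + 2 + k 1 + ∑ l ∈ Finset.Ico (i + 1) j, k l
        ≤ 2 * C + ∑ l ∈ Finset.Ico 2 j, k l :=
          add_le_add h_offset (Finset.sum_le_sum_of_subset (Finset.Ico_subset_Ico (by omega) le_rfl))
      _ < k j := hvs j (by omega) (by omega)
  · have hk_part : ∑ l ∈ Finset.Ico (i + 1) (i + 1 + (m - i)), k l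
        ≤ ∑ l ∈ Finset.Icc (j + 1) m, k l :=
      Finset.sum_le_sum_of_subset fun l hl => by
        simp only [Finset.mem_Ico, Finset.mem_Icc] at hl ⊢
        omega
    calc 0 + 2 + k 1 + ((List.range' (i + 1) (m - i)).map k).sum
          + ∑ l ∈ Finset.Ico 2 j, k' l
        ≤ 2 * C + (∑ l ∈ Finset.Icc (j + 1) m, k l) + ∑ l ∈ Finset.Ico 2 j, k' l := by
          rw [List.sum_map_range'_eq_sum_Ico]
          gcongr
      _ < k' j := hrec j hj1 (by omega)

/-- With (k₁, ..., k_m) C-very spread (k₁ > 2, the case treated in Section 7)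
and the recursive choice k'_j > 2C + k_{j+1} + ... + k_m + k'₂ + ... + k'_{j-1}
for 2 ≤ j ≤ i, the (m+1)-tuple (2, k₁, k_{i+1}, ..., k_m, k'₂, ..., k'_i),
listed in increasing order, is spread. -/
theorem extraRegularity_tuple_spread (m C i : ℕ) (hC : 2 < C) (k k' : ℕ → ℕ)
    (hk1 : 2 < k 1) (hk1C : k 1 ≤ C)
    (hvs : ∀ j, 2 ≤ j → j ≤ m → 2 * C + ∑ l ∈ Finset.Ico 2 j, k l < k j)
    (hi : 2 ≤ i) (him : i ≤ m)
    (hrec : ∀ j, 2 ≤ j → j ≤ i →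
      2 * C + (∑ l ∈ Finset.Icc (j + 1) m, k l) + ∑ l ∈ Finset.Ico 2 j, k' l < k' j) :
    SpreadList (2 :: k 1 ::
      ((List.range' (i + 1) (m - i)).map k ++ (List.range' 2 (i - 1)).map k')) :=
  extraRegularity_tuple_spread_general m C i k k' hk1 hk1C hvs hi hrec
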